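/- An R-module E is Σ-pure-injective (i.e., the direct sum E^{(I)} of I many copies of E is pure-injective for every set I) if and only if E^{(κ)} is pure-injective. -/

import Mathlib

universe u

/-- `A` is a pure submodule of its ambient module: every finite system of
`R`-linear equations `∑ j, r i j • x j = a i` with constants `a i ∈ A` that has
a solution in the ambient module has a solution in `A`. -/
def IsPureSubmodule {R : Type*} [Ring R] {M : Type*} [AddCommGroup M] [Module R M]
    (A : Submodule R M) : Prop :=
  ∀ (m n : ℕ) (r : Fin m → Fin n → R) (a : Fin m → M),
    (∀ i, a i ∈ A) →
    (∃ x : Fin n → M, ∀ i, (∑ j, r i j • x j) = a i) →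
    ∃ x : Fin n → M, (∀ j, x j ∈ A) ∧ ∀ i, (∑ j, r i j • x j) = a i

/-- A pure embedding is an injective linear map whose image is a pure submodule
of its codomain. -/
def IsPureEmbedding {R : Type*} [Ring R] {M N : Type*} [AddCommGroup M] [Module R M]
    [AddCommGroup N] [Module R N] (f : M →ₗ[R] N) : Prop :=
  Function.Injective f ∧ IsPureSubmodule (LinearMap.range f)

/-- `E` is pure-injective: every homomorphism `g : A → E` extends along every
pure embedding `f : A → B`. -/
def PureInjective (R : Type u) [Ring R] (E : Type u) [AddCommGroup E] [Module R E] : Prop :=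
  ∀ (A B : Type u) [AddCommGroup A] [Module R A] [AddCommGroup B] [Module R B]
    (f : A →ₗ[R] B), IsPureEmbedding f →
    ∀ g : A →ₗ[R] E, ∃ h : B →ₗ[R] E, h.comp f = g

/-!
If `E^(J)` is pure-injective for an infinite `J`, then `E` has the descending chain condition on
pp-definable subgroups: given `x k ∈ G k \ G (k + 1)` along a strictly descending chain, the
partial sums `a m` of the `x l`, placed in distinct coordinates of `E^(J)`, form a chain of cosets
`a k + G k`, and pure-injectivity (applied to the pure embedding of `E^(J)` into the germs at
`atTop` of its sequences) produces one element `e` in all of them; but `e` has finite support,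
and at a coordinate `l` outside it this forces `x l ∈ G (l + 1)`. Since pp-definable subgroups of
a direct sum are computed coordinatewise, every `E^(I)` inherits the chain condition. A module
with this chain condition is algebraically compact: enlarge a finitely solvable system to a
maximal one by Zorn; the pp cosets cut out by its finite subsystems stabilize, so each unknown can
be assigned a value. Algebraically compact modules are pure-injective.
-/

open Finsupp Filter DirectSum

theorem Finsupp.linearCombination_add_left {R M V : Type*} [Semiring R] [AddCommMonoid M]
    [Module R M] (x y : V → M) (c : V →₀ R) :
    linearCombination R (x + y) c = linearCombination R x c + linearCombination R y c := by
  simp only [linearCombination_apply, Pi.add_apply, smul_add, sum_add]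

theorem Finsupp.linearCombination_sub_left {R M V : Type*} [Ring R] [AddCommGroup M] [Module R M]
    (x y : V → M) (c : V →₀ R) :
    linearCombination R (x - y) c = linearCombination R x c - linearCombination R y c := by
  simp only [linearCombination_apply, Pi.sub_apply, smul_sub, sum_sub]

structure LinEq (R V M : Type*) [Zero R] where
  coeff : V →₀ R
  const : M

namespace LinEq

variable {R M N V : Type*} [Ring R] [AddCommGroup M] [Module R M] [AddCommGroup N] [Module R N]

def Holds (e : LinEq R V M) (x : V → M) : Prop :=
  linearCombination R x e.coeff = e.const

def solutions (T : Set (LinEq R V M)) : Set (V → M) :=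
  {x | ∀ e ∈ T, e.Holds x}

def IsFinitelySolvable (T : Set (LinEq R V M)) : Prop :=
  ∀ F : Finset (LinEq R V M), ↑F ⊆ T → (solutions (F : Set (LinEq R V M))).Nonempty

variable (M) in
def homSolutions (S : Set (V →₀ R)) : AddSubgroup (V → M) where
  carrier := {x | ∀ c ∈ S, linearCombination R x c = 0}
  zero_mem' c _ := linearCombination_zero_apply R c
  add_mem' {x y} hx hy c hc := by
    rw [linearCombination_add_left, hx c hc, hy c hc, add_zero]
  neg_mem' {x} hx c hc := by
    rw [← zero_sub, linearCombination_sub_left, hx c hc, linearCombination_zero_apply, sub_zero]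

-- With `S` finite, these are the pp-definable subgroups of `M`: the unknowns other than `v₀` are
-- existentially quantified.
variable (M) in
def ppSubgroup (S : Set (V →₀ R)) (v₀ : V) : AddSubgroup M :=
  (homSolutions M S).map (Pi.evalAddMonoidHom (fun _ => M) v₀)

variable {S S' : Set (V →₀ R)} {v₀ : V}

theorem mem_ppSubgroup {x : M} : x ∈ ppSubgroup M S v₀ ↔ ∃ Y ∈ homSolutions M S, Y v₀ = x :=
  AddSubgroup.mem_map

theorem homSolutions_anti (h : S ⊆ S') : homSolutions M S' ≤ homSolutions M S :=
  fun _ hx c hc => hx c (h hc)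

theorem ppSubgroup_anti (h : S ⊆ S') : ppSubgroup M S' v₀ ≤ ppSubgroup M S v₀ :=
  AddSubgroup.map_mono (homSolutions_anti h)

theorem comp_mem_homSolutions (f : M →ₗ[R] N) {x : V → M} (hx : x ∈ homSolutions M S) :
    f ∘ x ∈ homSolutions N S := fun c hc => by
  rw [← apply_linearCombination, hx c hc, map_zero]

theorem map_mem_ppSubgroup (f : M →ₗ[R] N) {x : M} (hx : x ∈ ppSubgroup M S v₀) :
    f x ∈ ppSubgroup N S v₀ := by
  obtain ⟨Y, hY, rfl⟩ := mem_ppSubgroup.1 hx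
  exact mem_ppSubgroup.2 ⟨f ∘ Y, comp_mem_homSolutions f hY, rfl⟩

variable {T T' : Set (LinEq R V M)}

theorem solutions_anti (h : T ⊆ T') : solutions T' ⊆ solutions T :=
  fun _ hx e he => hx e (h he)

theorem sub_mem_homSolutions {x y : V → M} (hx : x ∈ solutions T) (hy : y ∈ solutions T) :
    x - y ∈ homSolutions M (coeff '' T) := by
  rintro _ ⟨e, he, rfl⟩
  rw [linearCombination_sub_left, hx e he, hy e he, sub_self]

theorem sub_mem_solutions {x d : V → M} (hx : x ∈ solutions T)
    (hd : d ∈ homSolutions M (coeff '' T)) : x - d ∈ solutions T := fun e he => by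
  rw [Holds, linearCombination_sub_left, hx e he, hd _ ⟨e, he, rfl⟩, sub_zero]

noncomputable def assign (v : V) (a : M) : LinEq R V M := ⟨single v 1, a⟩

theorem holds_assign {v : V} {a : M} {x : V → M} :
    (assign v a : LinEq R V M).Holds x ↔ x v = a := by
  simp [assign, Holds]

theorem IsFinitelySolvable.exists_maximal (hT : IsFinitelySolvable T) :
    ∃ U, T ⊆ U ∧ Maximal IsFinitelySolvable U := by
  refine zorn_subset_nonempty {U | IsFinitelySolvable U} (fun C hC hchain ⟨U₀, hU₀⟩ =>
    ⟨⋃₀ C, fun F hF => ?_, fun _ => Set.subset_sUnion_of_mem⟩) T hT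
  rw [Set.sUnion_eq_biUnion] at hF
  obtain ⟨U, hUC, hFU⟩ :=
    hchain.directedOn.exists_mem_subset_of_finset_subset_biUnion (f := id) ⟨U₀, hU₀⟩ hF
  exact hC hUC F hFU

end LinEq

open LinEq

def HasDCCOnPPSubgroups (R M V : Type*) [Ring R] [AddCommGroup M] [Module R M] : Prop :=
  ∀ v₀ : V, WellFounded fun S S' : Finset (V →₀ R) =>
    ppSubgroup M (S : Set (V →₀ R)) v₀ < ppSubgroup M (S' : Set (V →₀ R)) v₀

namespace HasDCCOnPPSubgroups

variable {R M V : Type*} [Ring R] [AddCommGroup M] [Module R M]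

theorem exists_forall_eval_mem_solutions (hM : HasDCCOnPPSubgroups R M V) {U : Set (LinEq R V M)}
    (hU : IsFinitelySolvable U) (v₀ : V) :
    ∃ a : M, ∀ F : Finset (LinEq R V M), ↑F ⊆ U →
      ∃ Y : V → M, Y ∈ solutions (F : Set (LinEq R V M)) ∧ Y v₀ = a := by
  classical
  obtain ⟨F₀, hF₀U, hmin⟩ := (InvImage.wf (fun F : Finset (LinEq R V M) => F.image coeff)
    (hM v₀)).has_min {F : Finset (LinEq R V M) | ↑F ⊆ U} ⟨∅, by simp⟩
  obtain ⟨Y₀, hY₀⟩ := hU F₀ hF₀U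
  refine ⟨Y₀ v₀, fun F hF => ?_⟩
  have hF₁U : ↑(F ∪ F₀) ⊆ U := by rw [Finset.coe_union]; exact Set.union_subset hF hF₀U
  obtain ⟨Y, hY⟩ := hU (F ∪ F₀) hF₁U
  have hsub : (F₀ : Set (LinEq R V M)) ⊆ ↑(F ∪ F₀) := by simp
  have hmin' := hmin (F ∪ F₀) hF₁U
  simp only [InvImage, Finset.coe_image] at hmin'
  -- by minimality of `F₀` the pp subgroups of `F ∪ F₀` and of `F₀` coincide
  have hdiff : Y v₀ - Y₀ v₀ ∈ ppSubgroup M (coeff '' (↑(F ∪ F₀) : Set (LinEq R V M))) v₀ := by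
    rw [((ppSubgroup_anti (Set.image_mono hsub)).lt_or_eq.resolve_left hmin')]
    exact mem_ppSubgroup.2 ⟨Y - Y₀, sub_mem_homSolutions (solutions_anti hsub hY) hY₀, rfl⟩
  obtain ⟨Z, hZ, hZv⟩ := mem_ppSubgroup.1 hdiff
  exact ⟨Y - Z, solutions_anti (by simp) (sub_mem_solutions hY hZ), by simp [hZv]⟩

theorem solutions_nonempty (hM : HasDCCOnPPSubgroups R M V) {T : Set (LinEq R V M)}
    (hT : IsFinitelySolvable T) : (solutions T).Nonempty := by
  classical
  obtain ⟨U, hTU, hU⟩ := hT.exists_maximal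
  -- a value of `v` compatible with every finite subsystem of `U` may be added, so by maximality
  -- `U` already fixes the value of every unknown
  have hval : ∀ v, ∃ a, assign v a ∈ U := by
    intro v
    obtain ⟨a, ha⟩ := exists_forall_eval_mem_solutions hM hU.prop v
    refine ⟨a, hU.mem_of_prop_insert fun F hF => ?_⟩
    obtain ⟨Y, hY, hYv⟩ := ha (F.erase (assign v a)) fun e he => by
      simpa [(Finset.mem_erase.1 he).1] using hF (Finset.mem_of_mem_erase he)
    refine ⟨Y, fun e he => ?_⟩
    by_cases h : e = assign v a
    · exact h ▸ holds_assign.2 hYv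
    · exact hY e (Finset.mem_erase.2 ⟨h, he⟩)
  choose val hval using hval
  refine ⟨val, fun e he => ?_⟩
  obtain ⟨Y, hY⟩ := hU.prop (insert e (e.coeff.support.image fun v => assign v (val v))) (by
    simp only [Finset.coe_insert, Finset.coe_image, Set.insert_subset_iff, Set.image_subset_iff]
    exact ⟨hTU he, fun v _ => hval v⟩)
  have hYval : ∀ v ∈ e.coeff.support, Y v = val v := fun v hv =>
    holds_assign.1 (hY _ (Finset.mem_insert_of_mem (Finset.mem_image_of_mem _ hv)))
  have hYe : linearCombination R Y e.coeff = e.const := hY e (Finset.mem_insert_self _ _)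
  show linearCombination R val e.coeff = e.const
  rw [← hYe, linearCombination_apply, linearCombination_apply]
  exact Finsupp.sum_congr fun v hv => by rw [hYval v hv]

end HasDCCOnPPSubgroups

theorem IsPureSubmodule.exists_solution {R N : Type*} [Ring R] [AddCommGroup N] [Module R N]
    {A : Submodule R N} (hA : IsPureSubmodule A) {ι V : Type*} [Fintype ι] (c : ι → V →₀ R)
    (a : ι → N) (ha : ∀ i, a i ∈ A) (hx : ∃ x : V → N, ∀ i, linearCombination R x (c i) = a i) :
    ∃ x : V → N, (∀ v, x v ∈ A) ∧ ∀ i, linearCombination R x (c i) = a i := by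
  classical
  let W := Finset.univ.biUnion fun i => (c i).support
  let eι := Fintype.equivFin ι
  let eW := W.equivFin
  have hsum : ∀ i (y : V → N),
      ∑ j, c (eι.symm i) (eW.symm j) • y (eW.symm j) = linearCombination R y (c (eι.symm i)) := by
    intro i y
    rw [Equiv.sum_comp eW.symm (fun w : W => c _ w • y w),
      Finset.sum_coe_sort W (fun w => c _ w • y w),
      linearCombination_apply_of_mem_supported R ((mem_supported R _).2 ?_)]
    exact Finset.coe_subset.2 (Finset.subset_biUnion_of_mem (fun i => (c i).support)
      (Finset.mem_univ _))
  obtain ⟨x, hx⟩ := hx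
  obtain ⟨x', hx'A, hx'⟩ := hA _ _ (fun i j => c (eι.symm i) (eW.symm j)) (fun i => a (eι.symm i))
    (fun i => ha _) ⟨fun j => x (eW.symm j), fun i => by rw [hsum, hx]⟩
  let y : V → N := fun v => if hv : v ∈ W then x' (eW ⟨v, hv⟩) else 0
  refine ⟨y, fun v => ?_, fun i => ?_⟩
  · by_cases hv : v ∈ W
    · simpa [y, hv] using hx'A _
    · simp [y, hv]
  · have hy : ∀ j, y (eW.symm j) = x' j := fun j => by simp [y]
    rw [← eι.symm_apply_apply i, ← hsum, ← hx' (eι i)]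
    simp only [hy]

theorem PureInjective.of_forall_solvable {R M : Type u} [Ring R] [AddCommGroup M] [Module R M]
    (hM : ∀ (V : Type u) (T : Set (LinEq R V M)), IsFinitelySolvable T → (solutions T).Nonempty) :
    PureInjective R M := by
  intro A B _ _ _ _ f hf g
  -- the extension of `g` along `f` is a solution of `T`; purity of `f` makes `T` finitely solvable
  let T : Set (LinEq R B M) := {e | ∃ a, linearCombination R id e.coeff = f a ∧ e.const = g a}
  have hT : IsFinitelySolvable T := by
    intro F hF
    choose a ha hga using fun e : F => hF e.2
    obtain ⟨x, hxA, hx⟩ := hf.2.exists_solution (fun e : F => e.1.coeff) (fun e => f (a e))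
      (fun e => LinearMap.mem_range_self f _) ⟨id, ha⟩
    choose a' ha' using hxA
    refine ⟨g ∘ a', fun e he => ?_⟩
    have hfa' : f ∘ a' = x := funext ha'
    have : linearCombination R a' e.coeff = a ⟨e, he⟩ :=
      hf.1 (by rw [apply_linearCombination, hfa', hx ⟨e, he⟩])
    show linearCombination R (g ∘ a') e.coeff = e.const
    rw [← apply_linearCombination, this, hga ⟨e, he⟩]
  obtain ⟨x, hx⟩ := hM B T hT
  have hx' : ∀ (c : B →₀ R) (a : A), linearCombination R id c = f a →
      linearCombination R x c = g a := fun c a h => hx ⟨c, g a⟩ ⟨a, h, rfl⟩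
  refine ⟨{ toFun := x, map_add' := fun b₁ b₂ => ?_, map_smul' := fun r b => ?_ },
    LinearMap.ext fun a => ?_⟩
  · have := hx' (single b₁ 1 + single b₂ 1 - single (b₁ + b₂) 1) 0 (by simp)
    simp only [map_sub, map_add, linearCombination_single, one_smul, map_zero] at this
    exact (sub_eq_zero.1 this).symm
  · have := hx' (single b r - single (r • b) 1) 0 (by simp)
    simp only [map_sub, linearCombination_single, one_smul, map_zero] at this
    exact (sub_eq_zero.1 this).symm
  · simpa using hx' (single (f a) 1) a (by simp)

namespace Filter.Germ

variable (R : Type*) {M α : Type*} [Ring R] [AddCommGroup M] [Module R M] (l : Filter α)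

def coeLinearMap : (α → M) →ₗ[R] Germ l M where
  toFun := (↑)
  map_add' _ _ := rfl
  map_smul' _ _ := rfl

def constLinearMap : M →ₗ[R] Germ l M where
  toFun := (↑)
  map_add' _ _ := rfl
  map_smul' _ _ := rfl

theorem isPureEmbedding_constLinearMap [l.NeBot] :
    IsPureEmbedding (constLinearMap R l : M →ₗ[R] Germ l M) := by
  refine ⟨fun _ _ h => const_inj.1 h, fun m n r a ha ⟨x, hx⟩ => ?_⟩
  choose c hc using ha
  have hrep : ∀ j, ∃ y : α → M, coeLinearMap R l y = x j := fun j => Quotient.exists_rep (x j)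
  choose y hy using hrep
  have hrow : ∀ i, ∀ᶠ t in l, ∑ j, r i j • y j t = c i := by
    intro i
    have : coeLinearMap R l (∑ j, r i j • y j) = coeLinearMap R l (fun _ => c i) := by
      simp only [map_sum, map_smul, hy, hx i, ← hc i]
      rfl
    filter_upwards [coe_eq.1 this] with t ht
    simpa using ht
  obtain ⟨t, ht⟩ := (eventually_all.2 hrow).exists
  refine ⟨fun j => constLinearMap R l (y j t), fun j => LinearMap.mem_range_self _ _, fun i => ?_⟩
  simp only [← map_smul, ← map_sum, ht i, hc]

end Filter.Germ

theorem LinEq.coe_mem_ppSubgroup {R M V α : Type*} [Ring R] [AddCommGroup M] [Module R M]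
    {l : Filter α} {S : Set (V →₀ R)} {v₀ : V} {x : α → M}
    (hx : ∀ᶠ t in l, x t ∈ ppSubgroup M S v₀) : (x : Germ l M) ∈ ppSubgroup (Germ l M) S v₀ := by
  have hwit : ∀ t, ∃ Y : V → M, x t ∈ ppSubgroup M S v₀ → Y ∈ homSolutions M S ∧ Y v₀ = x t :=
    fun t => (em (x t ∈ ppSubgroup M S v₀)).elim
      (fun h => (mem_ppSubgroup.1 h).imp fun _ hY _ => hY) fun h => ⟨0, fun h' => (h h').elim⟩
  choose Y hY using hwit
  refine mem_ppSubgroup.2 ⟨fun v => Germ.coeLinearMap R l fun t => Y t v, fun c hc => ?_, ?_⟩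
  · change linearCombination R (Germ.coeLinearMap R l ∘ fun v t => Y t v) c = 0
    rw [← apply_linearCombination, ← map_zero (Germ.coeLinearMap R l)]
    refine Germ.coe_eq.2 (hx.mono fun t ht => ?_)
    have hev : linearCombination R (fun v t => Y t v) c t = linearCombination R (Y t) c := by
      simp only [linearCombination_apply, Finsupp.sum, Finset.sum_apply, Pi.smul_apply]
    simpa [hev] using (hY t ht).1 c hc
  · exact Germ.coe_eq.2 (hx.mono fun t ht => (hY t ht).2)

theorem PureInjective.exists_forall_sub_mem_ppSubgroup {R M : Type u} [Ring R] [AddCommGroup M]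
    [Module R M] (hM : PureInjective R M) {V : Type*} (S : ℕ → Set (V →₀ R)) (v₀ : V)
    (a : ℕ → M) (ha : ∀ k, ∀ᶠ n in atTop, a n - a k ∈ ppSubgroup M (S k) v₀) :
    ∃ e, ∀ k, e - a k ∈ ppSubgroup M (S k) v₀ := by
  obtain ⟨h, hh⟩ := hM M (Germ (atTop : Filter ℕ) M) (Germ.constLinearMap R atTop)
    (Germ.isPureEmbedding_constLinearMap R atTop) LinearMap.id
  refine ⟨h a, fun k => ?_⟩
  have := map_mem_ppSubgroup h (coe_mem_ppSubgroup (ha k))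
  have hhk : h (Germ.constLinearMap R atTop (a k)) = a k := LinearMap.congr_fun hh (a k)
  change h ((a : Germ atTop M) - Germ.constLinearMap R atTop (a k)) ∈ _ at this
  rwa [map_sub, hhk] at this

section DirectSum

variable {R V I : Type*} [Ring R] {S : Set (V →₀ R)} {v₀ : V}

theorem LinEq.mem_ppSubgroup_directSum {β : I → Type*} [∀ i, AddCommGroup (β i)]
    [∀ i, Module R (β i)] (x : ⨁ i, β i) :
    x ∈ ppSubgroup (⨁ i, β i) S v₀ ↔ ∀ i, x i ∈ ppSubgroup (β i) S v₀ := by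
  classical
  refine ⟨fun hx i => map_mem_ppSubgroup (component R I β i) hx, fun hx => ?_⟩
  choose Y hY hYv using fun i => mem_ppSubgroup.1 (hx i)
  refine mem_ppSubgroup.2 ⟨∑ i ∈ x.support, lof R I β i ∘ Y i,
    AddSubgroup.sum_mem _ fun i _ => comp_mem_homSolutions _ (hY i), ?_⟩
  simp only [Finset.sum_apply, Function.comp_apply, hYv]
  exact sum_support_of x

theorem HasDCCOnPPSubgroups.directSum {E : Type*} [AddCommGroup E] [Module R E]
    (hE : HasDCCOnPPSubgroups R E V) : HasDCCOnPPSubgroups R (⨁ _ : I, E) V := by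
  classical
  refine fun v₀ => Subrelation.wf (fun {S S'} hlt => ?_) (hE v₀)
  obtain ⟨hle, x, hxS', hxS⟩ := SetLike.lt_iff_le_and_exists.1 hlt
  rw [mem_ppSubgroup_directSum] at hxS' hxS
  push Not at hxS
  obtain ⟨i, hi⟩ := hxS
  refine SetLike.lt_iff_le_and_exists.2 ⟨fun z hz => ?_, x i, hxS' i, hi⟩
  have := (mem_ppSubgroup_directSum _).1 (hle (map_mem_ppSubgroup (lof R I (fun _ => E) i) hz)) i
  rwa [lof_apply] at this

theorem HasDCCOnPPSubgroups.of_pureInjective_directSum {R E J : Type u} [Ring R] [AddCommGroup E]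
    [Module R E] [Infinite J] (hE : PureInjective R (⨁ _ : J, E)) (V : Type*) :
    HasDCCOnPPSubgroups R E V := by
  classical
  intro v₀
  refine wellFounded_iff_isEmpty_descending_chain.2 ⟨fun ⟨S, hS⟩ => ?_⟩
  have hanti : Antitone fun k => ppSubgroup E (S k : Set (V →₀ R)) v₀ :=
    antitone_nat_of_succ_le fun k => (hS k).le
  choose x hxS hxS' using fun k => SetLike.exists_of_lt (hS k)
  let ι := Infinite.natEmbedding J
  let a : ℕ → ⨁ _ : J, E := fun m => ∑ l ∈ Finset.range m, lof R J _ (ι l) (x l)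
  obtain ⟨e, he⟩ := hE.exists_forall_sub_mem_ppSubgroup (fun k => S k) v₀ a fun k =>
    eventually_atTop.2 ⟨k, fun n hn => by
      rw [← Finset.sum_Ico_eq_sub _ hn]
      exact AddSubgroup.sum_mem _ fun l hl =>
        map_mem_ppSubgroup _ (hanti (Finset.mem_Ico.1 hl).1 (hxS l))⟩
  -- `e` has finite support, so some coordinate `ι k` of `e` vanishes; there `e - a (k + 1)`
  -- is `-x k`
  obtain ⟨k, hk⟩ := Infinite.exists_notMem_finset (e.support.preimage ι ι.injective.injOn)
  have hek : e (ι k) = 0 := by simpa using hk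
  have hak : a (k + 1) (ι k) = x k := by
    simp only [a, DirectSum.sum_apply]
    rw [Finset.sum_eq_single k (fun l _ hlk => ?_) (by simp), lof_apply]
    rw [lof_eq_of, of_eq_of_ne _ _ _ (ι.injective.ne hlk).symm]
  have := (mem_ppSubgroup_directSum _).1 (he (k + 1)) (ι k)
  rw [DirectSum.sub_apply, hek, hak, zero_sub, neg_mem_iff] at this
  exact hxS' k this

end DirectSum

theorem stmt13 (R : Type u) [Ring R] (E : Type u) [AddCommGroup E] [Module R E]
    (J : Type u) (hJ : Cardinal.mk J = max (Cardinal.mk R) Cardinal.aleph0) :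
    -- `E` is Σ-pure-injective, i.e. `E^(I)` is pure-injective for every set `I`,
    -- iff `E^(κ)` is pure-injective, where `κ = card R + ℵ₀`
    (∀ I : Type u, PureInjective R (DirectSum I fun _ => E)) ↔
      PureInjective R (DirectSum J fun _ => E) := by
  refine ⟨fun h => h J, fun hJE I => ?_⟩
  have : Infinite J := Cardinal.infinite_iff.2 (hJ ▸ le_max_right _ _)
  refine PureInjective.of_forall_solvable fun V T hT => ?_
  exact (HasDCCOnPPSubgroups.of_pureInjective_directSum hJE V).directSum.solutions_nonempty hT
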